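/- Let S > 0 and let g : ℝ → ℝ be a bounded measurable nonnegative function with support contained in (0, S]. Define v(t,r) = (4πt)^{−1/2} ∫₀^∞ k(t,r,s) g(s) ds. Then for every t > 0: v(t,r) ≥ 0 for all r > 0, and the partial derivative ∂ᵣ v(t,r) satisfies ∂ᵣ v(t,r) ≤ 0 for every r ≥ √(2t) + S. -/

import Mathlib

open MeasureTheory

/-- `k(t,r,s) = exp(-(r-s)²/(4t)) - exp(-(r+s)²/(4t))`,
the (unnormalized) Dirichlet heat kernel of the half-line. -/
noncomputable def halfLineKernel (t r s : ℝ) : ℝ :=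
  Real.exp (-(r - s) ^ 2 / (4 * t)) - Real.exp (-(r + s) ^ 2 / (4 * t))

/-- `v(t,r) = (4πt)^{-1/2} ∫₀^∞ k(t,r,s) g(s) ds`. -/
noncomputable def halfLineSol (g : ℝ → ℝ) (t r : ℝ) : ℝ :=
  (4 * Real.pi * t) ^ (-(1 : ℝ) / 2) * ∫ s in Set.Ioi (0 : ℝ), halfLineKernel t r s * g s

/-!
Both claims are read off the integrand. For `r, s > 0` we have `(r - s)² ≤ (r + s)²`, so the
kernel is nonnegative. Since `∂ᵣ k(t,r,s) = ((r+s) e^{-(r+s)²/4t} - (r-s) e^{-(r-s)²/4t}) / 2t`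
and `x ↦ x e^{-x²/4t}` decreases on `[√(2t), ∞)`, the kernel decreases in `r` once
`r - s ≥ √(2t)`. For `s ≤ S` in the support of `g ≥ 0` this holds as soon as `r ≥ √(2t) + S`,
so `v(t, ·)` is antitone there and its derivative is nonpositive.
-/

open Set Real

lemma antitoneOn_mul_exp_neg_sq_div {t : ℝ} (ht : 0 < t) :
    AntitoneOn (fun x : ℝ => x * exp (-x ^ 2 / (4 * t))) (Ici (√(2 * t))) := by
  have hderiv : ∀ x : ℝ, HasDerivAt (fun x : ℝ => x * exp (-x ^ 2 / (4 * t)))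
      (exp (-x ^ 2 / (4 * t)) * (1 - x ^ 2 / (2 * t))) x := by
    intro x
    have hexponent : HasDerivAt (fun x : ℝ => -x ^ 2 / (4 * t)) (-(2 * x) / (4 * t)) x := by
      simpa using (hasDerivAt_pow 2 x).neg.div_const (4 * t)
    refine ((hasDerivAt_id' x).fun_mul hexponent.exp).congr_deriv ?_
    field_simp
    ring
  refine antitoneOn_of_hasDerivWithinAt_nonpos (convex_Ici _) (by fun_prop)
    (fun x _ => (hderiv x).hasDerivWithinAt) fun x hx => ?_
  rw [interior_Ici, mem_Ioi] at hx
  have hsq : 2 * t ≤ x ^ 2 := by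
    nlinarith [sq_sqrt (by linarith : (0 : ℝ) ≤ 2 * t), sqrt_nonneg (2 * t)]
  have hfactor : 1 - x ^ 2 / (2 * t) ≤ 0 := by
    rw [sub_nonpos, le_div_iff₀ (by linarith)]
    linarith
  exact mul_nonpos_of_nonneg_of_nonpos (exp_nonneg _) hfactor

lemma hasDerivAt_halfLineKernel (t r s : ℝ) :
    HasDerivAt (fun r => halfLineKernel t r s)
      (((r + s) * exp (-(r + s) ^ 2 / (4 * t))
        - (r - s) * exp (-(r - s) ^ 2 / (4 * t))) / (2 * t)) r := by
  have hminus : HasDerivAt (fun r : ℝ => -(r - s) ^ 2 / (4 * t))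
      (-(2 * (r - s) ^ 1 * 1) / (4 * t)) r :=
    (((hasDerivAt_id r).sub_const s).pow 2).neg.div_const (4 * t)
  have hplus : HasDerivAt (fun r : ℝ => -(r + s) ^ 2 / (4 * t))
      (-(2 * (r + s) ^ 1 * 1) / (4 * t)) r :=
    (((hasDerivAt_id r).add_const s).pow 2).neg.div_const (4 * t)
  refine (hminus.exp.fun_sub hplus.exp).congr_deriv ?_
  field_simp
  ring

lemma halfLineKernel_antitoneOn {t s : ℝ} (ht : 0 < t) (hs : 0 ≤ s) :
    AntitoneOn (fun r => halfLineKernel t r s) (Ici (√(2 * t) + s)) := by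
  refine antitoneOn_of_hasDerivWithinAt_nonpos (convex_Ici _)
    (by unfold halfLineKernel; fun_prop)
    (fun r _ => (hasDerivAt_halfLineKernel t r s).hasDerivWithinAt) fun r hr => ?_
  rw [interior_Ici, mem_Ioi] at hr
  have hle : √(2 * t) ≤ r - s := by linarith
  have hdecay := antitoneOn_mul_exp_neg_sq_div ht (mem_Ici.2 hle)
    (mem_Ici.2 (by linarith : √(2 * t) ≤ r + s)) (by linarith : r - s ≤ r + s)
  exact div_nonpos_of_nonpos_of_nonneg (sub_nonpos.2 hdecay) (by linarith)

lemma halfLineKernel_nonneg {t r s : ℝ} (ht : 0 ≤ t) (hr : 0 ≤ r) (hs : 0 ≤ s) :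
    0 ≤ halfLineKernel t r s := by
  rw [halfLineKernel, sub_nonneg, exp_le_exp]
  exact div_le_div_of_nonneg_right (by nlinarith) (by linarith)

lemma abs_halfLineKernel_le_one {t : ℝ} (ht : 0 ≤ t) (r s : ℝ) :
    |halfLineKernel t r s| ≤ 1 := by
  have hle : ∀ x : ℝ, exp (-x ^ 2 / (4 * t)) ≤ 1 := fun x =>
    exp_le_one_iff.2 (div_nonpos_of_nonpos_of_nonneg (by nlinarith) (by linarith))
  rw [halfLineKernel, abs_le]
  constructor <;>
    linarith [hle (r - s), hle (r + s), exp_pos (-(r - s) ^ 2 / (4 * t)),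
      exp_pos (-(r + s) ^ 2 / (4 * t))]

lemma integrable_halfLineKernel_mul {μ : Measure ℝ} {g : ℝ → ℝ} (hg : Integrable g μ)
    {t : ℝ} (ht : 0 ≤ t) (r : ℝ) : Integrable (fun s => halfLineKernel t r s * g s) μ :=
  hg.bdd_mul (by unfold halfLineKernel; fun_prop)
    (ae_of_all _ fun s => abs_halfLineKernel_le_one ht r s)

lemma halfLineSol_nonneg {g : ℝ → ℝ} (hg : ∀ s ∈ Ioi 0, 0 ≤ g s) {t r : ℝ} (ht : 0 ≤ t)
    (hr : 0 ≤ r) : 0 ≤ halfLineSol g t r :=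
  mul_nonneg (rpow_nonneg (by positivity) _) <| setIntegral_nonneg measurableSet_Ioi
    fun s hs => mul_nonneg (halfLineKernel_nonneg ht hr (le_of_lt hs)) (hg s hs)

lemma halfLineSol_antitoneOn {g : ℝ → ℝ} {S t : ℝ} (hg : IntegrableOn g (Ioi 0))
    (hg0 : ∀ s ∈ Ioi 0, 0 ≤ g s) (hsupp : Function.support g ⊆ Iic S) (ht : 0 < t) :
    AntitoneOn (halfLineSol g t) (Ici (√(2 * t) + S)) := by
  intro r₁ hr₁ r₂ hr₂ hr
  refine mul_le_mul_of_nonneg_left ?_ (rpow_nonneg (by positivity) _)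
  refine setIntegral_mono_on (integrable_halfLineKernel_mul hg ht.le r₂)
    (integrable_halfLineKernel_mul hg ht.le r₁) measurableSet_Ioi fun s hs => ?_
  by_cases hgs : g s = 0
  · simp [hgs]
  have hsS : s ≤ S := hsupp hgs
  have hr₁s : √(2 * t) + s ≤ r₁ := by linarith [mem_Ici.1 hr₁]
  exact mul_le_mul_of_nonneg_right
    (halfLineKernel_antitoneOn ht (le_of_lt hs) hr₁s (hr₁s.trans hr) hr) (hg0 s hs)

lemma deriv_nonpos_of_antitoneOn_Ici {f : ℝ → ℝ} {a : ℝ} (hf : AntitoneOn f (Ici a)) :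
    deriv f a ≤ 0 := by
  by_cases hd : DifferentiableAt ℝ f a
  · rw [← hd.derivWithin (uniqueDiffWithinAt_Ici a)]
    exact hf.derivWithin_nonpos
  · rw [deriv_zero_of_not_differentiableAt hd]

theorem halfLineSol_nonneg_and_deriv_nonpos_general (S : ℝ) (g : ℝ → ℝ)
    (hmeas : Measurable g) (B : ℝ) (hB : ∀ x, |g x| ≤ B) (hnonneg : ∀ x, 0 ≤ g x)
    (hsupp : Function.support g ⊆ Set.Ioc (0 : ℝ) S) :
    ∀ t : ℝ, 0 < t →
      (∀ r : ℝ, 0 < r → 0 ≤ halfLineSol g t r) ∧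
      ∀ r : ℝ, Real.sqrt (2 * t) + S ≤ r → deriv (fun ρ => halfLineSol g t ρ) r ≤ 0 := by
  intro t ht
  have hint : Integrable g :=
    (integrableOn_iff_integrable_of_support_subset hsupp).1 <|
      Measure.integrableOn_of_bounded (by simp) hmeas.aestronglyMeasurable (ae_of_all _ hB)
  have hanti := halfLineSol_antitoneOn hint.integrableOn (fun s _ => hnonneg s)
    (hsupp.trans Ioc_subset_Iic_self) ht
  exact ⟨fun r hr => halfLineSol_nonneg (fun s _ => hnonneg s) ht.le hr.le,
    fun r hr => deriv_nonpos_of_antitoneOn_Ici (hanti.mono (Ici_subset_Ici.2 hr))⟩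

/-- For a bounded measurable nonnegative `g` supported in `(0,S]`, the solution `v` of
the half-line Dirichlet heat equation is nonnegative for `r > 0` and its `r`-derivative
is nonpositive for `r ≥ √(2t) + S`. -/
theorem halfLineSol_nonneg_and_deriv_nonpos (S : ℝ) (hS : 0 < S) (g : ℝ → ℝ)
    (hmeas : Measurable g) (B : ℝ) (hB : ∀ x, |g x| ≤ B) (hnonneg : ∀ x, 0 ≤ g x)
    (hsupp : Function.support g ⊆ Set.Ioc (0 : ℝ) S) :
    ∀ t : ℝ, 0 < t →
      (∀ r : ℝ, 0 < r → 0 ≤ halfLineSol g t r) ∧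
      ∀ r : ℝ, Real.sqrt (2 * t) + S ≤ r → deriv (fun ρ => halfLineSol g t ρ) r ≤ 0 :=
  halfLineSol_nonneg_and_deriv_nonpos_general S g hmeas B hB hnonneg hsupp
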